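/- For every connected chain graph G, the maximum number of internal vertices over all spanning trees satisfies |E(P*)| - 2 ≤ Opt(G) ≤ |E(P*)| - 1, where P* is an optimal path cover of G. -/

import Mathlib

open SimpleGraph

/-- `T` is a spanning tree of `G`. -/
def IsSpanningTreeOf {V : Type*} (G T : SimpleGraph V) : Prop :=
  T ≤ G ∧ T.IsTree

/-- The number of internal vertices (vertices of degree at least 2) of a graph. -/
noncomputable def internalCount {V : Type*} (T : SimpleGraph V) : ℕ :=
  {v | 2 ≤ (T.neighborSet v).ncard}.ncard

/-- The number of leaves (vertices of degree exactly 1) of a graph. -/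
noncomputable def leafCount {V : Type*} (T : SimpleGraph V) : ℕ :=
  {v | (T.neighborSet v).ncard = 1}.ncard

/-- `P` is a path cover of `G`: a spanning subgraph each of whose connected
components is a path, i.e. an acyclic subgraph of maximum degree at most 2. -/
def IsPathCoverOf {V : Type*} (G P : SimpleGraph V) : Prop :=
  P ≤ G ∧ P.IsAcyclic ∧ ∀ v, (P.neighborSet v).ncard ≤ 2

/-- `P` is an optimal path cover of `G`: a path cover with the maximum number of edges. -/
def IsOptPathCoverOf {V : Type*} (G P : SimpleGraph V) : Prop :=
  IsPathCoverOf G P ∧ ∀ Q, IsPathCoverOf G Q → Q.edgeSet.ncard ≤ P.edgeSet.ncard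

/-- `(X, Y)` is a bipartition of `G`. -/
def IsBipartition {V : Type*} (G : SimpleGraph V) (X Y : Set V) : Prop :=
  (∀ v, (v ∈ X ∧ v ∉ Y) ∨ (v ∈ Y ∧ v ∉ X)) ∧
  (∀ u v, G.Adj u v → (u ∈ X ∧ v ∈ Y) ∨ (u ∈ Y ∧ v ∈ X))

/-- `(ox, oy)` is a strong ordering of the bipartite graph `G` with parts `X`, `Y`:
for edges `a b` and `a' b'` with `a, a' ∈ X`, `b, b' ∈ Y`, if `a < a'` and `b' < b`
then `a b'` and `a' b` are also edges. -/
def StrongOrdering {V : Type*} (G : SimpleGraph V) (X Y : Set V)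
    (ox oy : V → ℕ) : Prop :=
  ∀ a a' b b', a ∈ X → a' ∈ X → b ∈ Y → b' ∈ Y → G.Adj a b → G.Adj a' b' →
    ox a < ox a' → oy b' < oy b → G.Adj a b' ∧ G.Adj a' b

/-- A chain graph: a bipartite graph in which the neighborhoods of the vertices
of `X` are totally ordered by inclusion. -/
def IsChainGraph {V : Type*} (G : SimpleGraph V) (X Y : Set V) : Prop :=
  IsBipartition G X Y ∧ ∀ x ∈ X, ∀ x' ∈ X,
    G.neighborSet x ⊆ G.neighborSet x' ∨ G.neighborSet x' ⊆ G.neighborSet x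


section AuxiliaryLemmas

open SimpleGraph Finset

variable {V : Type*}

lemma nbr_mono {G H : SimpleGraph V} (h : G ≤ H) (v : V) :
    G.neighborSet v ⊆ H.neighborSet v := fun w hw => h hw

lemma nd_mono [Finite V] {G H : SimpleGraph V} (h : G ≤ H) (v : V) :
    (G.neighborSet v).ncard ≤ (H.neighborSet v).ncard :=
  Set.ncard_le_ncard (nbr_mono h v) (Set.toFinite _)

lemma acyclic_anti {G H : SimpleGraph V} (h : G ≤ H) (hH : H.IsAcyclic) : G.IsAcyclic := by
  intro v c hc
  exact hH (c.transfer H (fun e he => edgeSet_mono h (c.edges_subset_edgeSet he)))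
    (hc.transfer _)

lemma edge_le {a b : V} {G : SimpleGraph V} (h : G.Adj a b) : edge a b ≤ G := by
  intro u w hw
  rw [edge_adj] at hw
  rcases hw.1 with ⟨rfl, rfl⟩ | ⟨rfl, rfl⟩
  · exact h
  · exact h.symm

lemma edgeSet_edge {a b : V} (h : a ≠ b) : (edge a b).edgeSet = {s(a, b)} := by
  rw [edge, edgeSet_fromEdgeSet]
  ext e
  simp only [Set.mem_diff, Set.mem_singleton_iff, Set.mem_setOf_eq]
  constructor
  · exact fun he => he.1
  · rintro rfl
    exact ⟨rfl, by simp [h]⟩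

lemma sup_edge_edgeSet {a b : V} {G : SimpleGraph V} (h : a ≠ b) :
    (G ⊔ edge a b).edgeSet = G.edgeSet ∪ {s(a, b)} := by
  rw [edgeSet_sup, edgeSet_edge h]

/-- Adding an edge between two non-connected vertices preserves acyclicity. -/
lemma acyclic_sup_edge {G : SimpleGraph V} {a b : V} (hab : a ≠ b)
    (hr : ¬ G.Reachable a b) (hG : G.IsAcyclic) : (G ⊔ edge a b).IsAcyclic := by
  have hbridge : (G ⊔ edge a b).IsBridge s(a, b) := by
    rw [isBridge_iff_adj_and_forall_walk_mem_edges]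
    refine fun p => ?_
    by_contra hmem
    refine hr ⟨p.transfer G fun e he => ?_⟩
    have := p.edges_subset_edgeSet he
    rw [sup_edge_edgeSet hab] at this
    rcases this with h1 | h1
    · exact h1
    · exact absurd (Set.mem_singleton_iff.1 h1 ▸ he) hmem
  intro v c hc
  have hne : s(a, b) ∉ c.edges :=
    hbridge.notMem_edges_of_isCycle hc
  refine hG (c.transfer G fun e he => ?_) (hc.transfer _)
  have := c.edges_subset_edgeSet he
  rw [sup_edge_edgeSet hab] at this
  rcases this with h1 | h1
  · exact h1
  · exact absurd (Set.mem_singleton_iff.1 h1 ▸ he) hne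

lemma walk_cross {A G : SimpleGraph V} {u w : V} (p : G.Walk u w) (h : ¬A.Reachable u w) :
    ∃ a b, G.Adj a b ∧ ¬A.Reachable a b := by
  induction p with
  | nil => exact absurd (Reachable.refl _) h
  | @cons u v w hadj p ih =>
    by_cases hr : A.Reachable u v
    · exact ih fun hvw => h (hr.trans hvw)
    · exact ⟨u, v, hadj, hr⟩

lemma exists_spanning_tree [Fintype V] {G F : SimpleGraph V} (hG : G.Connected)
    (hF : F ≤ G) (hFa : F.IsAcyclic) :
    ∃ T, F ≤ T ∧ T ≤ G ∧ T.IsTree := by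
  classical
  set S : Set ℕ := {n | ∃ A : SimpleGraph V, F ≤ A ∧ A ≤ G ∧ A.IsAcyclic ∧ A.edgeSet.ncard = n}
    with hS
  have hne : S.Nonempty := ⟨_, F, le_refl F, hF, hFa, rfl⟩
  have hbdd : BddAbove S := by
    refine ⟨(Set.univ : Set (Sym2 V)).ncard, ?_⟩
    rintro n ⟨A, -, -, -, rfl⟩
    exact Set.ncard_le_ncard (Set.subset_univ _) (Set.toFinite _)
  obtain ⟨A, hFA, hAG, hAa, hcard⟩ := Nat.sSup_mem hne hbdd
  refine ⟨A, hFA, hAG, ?_, hAa⟩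
  -- connectedness
  have hnonempty : Nonempty V := hG.nonempty
  rw [connected_iff]
  refine ⟨fun u w => ?_, hnonempty⟩
  by_contra hr
  obtain ⟨a, b, hab, habr⟩ := walk_cross (hG.preconnected u w).some hr
  have hne' : s(a, b) ∉ A.edgeSet := fun hmem => habr (A.mem_edgeSet.1 hmem).reachable
  have hmem : A.edgeSet.ncard + 1 ∈ S := by
    refine ⟨A ⊔ edge a b, le_trans hFA le_sup_left, sup_le hAG (edge_le hab), 
      acyclic_sup_edge hab.ne habr hAa, ?_⟩
    rw [sup_edge_edgeSet hab.ne, Set.union_singleton,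
      Set.ncard_insert_of_notMem hne' (Set.toFinite _)]
  have := le_csSup hbdd hmem
  rw [← hcard] at this
  omega

lemma ncard_set_eq_card_filter [Fintype V] (p : V → Prop) [DecidablePred p] :
    {v | p v}.ncard = (Finset.univ.filter p).card := by
  rw [Set.ncard_eq_toFinset_card', Set.toFinset_setOf]

lemma nd_eq_degree [Fintype V] (G : SimpleGraph V) [DecidableRel G.Adj] (v : V) :
    (G.neighborSet v).ncard = G.degree v := by
  rw [Set.ncard_eq_toFinset_card']
  rfl

lemma encard_eq_card_edgeFinset [Fintype V] (G : SimpleGraph V) [DecidableRel G.Adj] :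
    G.edgeSet.ncard = G.edgeFinset.card := by
  rw [Set.ncard_eq_toFinset_card']
  congr 1

lemma handshake [Fintype V] (G : SimpleGraph V) :
    ∑ v : V, (G.neighborSet v).ncard = 2 * G.edgeSet.ncard := by
  classical
  rw [encard_eq_card_edgeFinset, ← sum_degrees_eq_twice_card_edges]
  exact Finset.sum_congr rfl fun v _ => nd_eq_degree G v

/-- every forest contains a spanning linear forest missing few edges. -/
lemma exists_linear_subforest [Fintype V] : ∀ (n : ℕ) (F : SimpleGraph V),
    F.edgeSet.ncard = n → F.IsAcyclic →
    ∃ Q, Q ≤ F ∧ Q.IsAcyclic ∧ (∀ v, (Q.neighborSet v).ncard ≤ 2) ∧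
      F.edgeSet.ncard ≤ Q.edgeSet.ncard + ∑ v : V, ((F.neighborSet v).ncard - 2) := by
  intro n
  induction n using Nat.strong_induction_on with
  | _ n ih =>
    intro F hcard hacyc
    by_cases hdeg : ∀ v, (F.neighborSet v).ncard ≤ 2
    · exact ⟨F, le_refl F, hacyc, hdeg, Nat.le_add_right _ _⟩
    push_neg at hdeg
    obtain ⟨v, hv⟩ := hdeg
    have hv3 : 3 ≤ (F.neighborSet v).ncard := hv
    have hnon : (F.neighborSet v).Nonempty := by
      apply Set.nonempty_of_ncard_ne_zero; omega
    obtain ⟨u, hu⟩ := hnon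
    have hadj : F.Adj v u := hu
    have hvu : v ≠ u := hadj.ne
    set F' := F.deleteEdges {s(v, u)} with hF'
    have hle : F' ≤ F := deleteEdges_le _
    have hacyc' : F'.IsAcyclic := acyclic_anti hle hacyc
    have hedge : F'.edgeSet = F.edgeSet \ {s(v, u)} := edgeSet_deleteEdges _
    have hmem : s(v, u) ∈ F.edgeSet := hadj
    have hcard' : F'.edgeSet.ncard = n - 1 := by
      rw [hedge, Set.ncard_diff_singleton_of_mem hmem, hcard]
    have hn1 : 1 ≤ n := by
      rw [← hcard]
      exact (Set.ncard_pos (Set.toFinite _)).2 ⟨_, hmem⟩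
    -- neighborhoods
    have hnbrv : F'.neighborSet v = F.neighborSet v \ {u} := by
      ext w
      constructor
      · intro h
        rw [Set.mem_diff, Set.mem_singleton_iff]
        have h' := (deleteEdges_adj.1 h)
        exact ⟨h'.1, fun hwu => h'.2 (by rw [hwu]; rfl)⟩
      · intro h
        rw [Set.mem_diff, Set.mem_singleton_iff] at h
        refine deleteEdges_adj.2 ⟨h.1, fun hmem => ?_⟩
        exact h.2 (Sym2.congr_right.1 (Set.mem_singleton_iff.1 hmem))
    have hnbru : F'.neighborSet u = F.neighborSet u \ {v} := by
      ext w
      constructor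
      · intro h
        rw [Set.mem_diff, Set.mem_singleton_iff]
        have h' := (deleteEdges_adj.1 h)
        refine ⟨h'.1, fun hwv => h'.2 ?_⟩
        rw [hwv, Sym2.eq_swap]
        rfl
      · intro h
        rw [Set.mem_diff, Set.mem_singleton_iff] at h
        refine deleteEdges_adj.2 ⟨h.1, fun hmem => ?_⟩
        have : s(u, w) = s(u, v) := by
          rw [Set.mem_singleton_iff] at hmem
          rw [hmem, Sym2.eq_swap]
        exact h.2 (Sym2.congr_right.1 this)
    have hnbro : ∀ w, w ≠ v → w ≠ u → F'.neighborSet w = F.neighborSet w := by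
      intro w hwv hwu
      ext z
      constructor
      · intro h
        exact (deleteEdges_adj.1 h).1
      · intro h
        refine deleteEdges_adj.2 ⟨h, fun hmem => ?_⟩
        rw [Set.mem_singleton_iff, Sym2.eq_iff] at hmem
        rcases hmem with ⟨rfl, -⟩ | ⟨rfl, -⟩
        · exact hwv rfl
        · exact hwu rfl
    have hndv : (F'.neighborSet v).ncard = (F.neighborSet v).ncard - 1 := by
      rw [hnbrv, Set.ncard_diff_singleton_of_mem hu]
    have hndu : (F'.neighborSet u).ncard = (F.neighborSet u).ncard - 1 := by
      have hvmem : v ∈ F.neighborSet u := hadj.symm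
      rw [hnbru, Set.ncard_diff_singleton_of_mem hvmem]
    -- sum inequality
    have hsum : (∑ w : V, ((F'.neighborSet w).ncard - 2)) + 1 ≤
        ∑ w : V, ((F.neighborSet w).ncard - 2) := by
      classical
      rw [← Finset.add_sum_erase _ _ (Finset.mem_univ v),
        ← Finset.add_sum_erase _ (fun w => (F.neighborSet w).ncard - 2) (Finset.mem_univ v)]
      have h1 : ((F'.neighborSet v).ncard - 2) + 1 ≤ (F.neighborSet v).ncard - 2 := by omega
      have h2 : ∑ w ∈ Finset.univ.erase v, ((F'.neighborSet w).ncard - 2) ≤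
          ∑ w ∈ Finset.univ.erase v, ((F.neighborSet w).ncard - 2) := by
        apply Finset.sum_le_sum
        intro w hw
        by_cases hwu : w = u
        · subst hwu; omega
        · rw [hnbro w (Finset.ne_of_mem_erase hw) hwu]
      omega
    obtain ⟨Q, hQF', hQa, hQd, hQcard⟩ := ih (n - 1) (by omega) F' hcard' hacyc'
    refine ⟨Q, le_trans hQF' hle, hQa, hQd, ?_⟩
    rw [hcard] at *
    omega

lemma connected_deg_pos [Fintype V] {G : SimpleGraph V} (hG : G.Connected)
    (hcard : 2 ≤ Fintype.card V) (v : V) : 1 ≤ (G.neighborSet v).ncard := by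
  obtain ⟨w, hw⟩ := Fintype.exists_ne_of_one_lt_card (by omega) v
  have hr := hG.preconnected v w
  obtain ⟨p⟩ := hr
  cases p with
  | nil => exact absurd rfl hw.symm
  | cons h p => exact (Set.ncard_pos (Set.toFinite _)).2 ⟨_, h⟩

lemma upper_bound [Fintype V] {G T P : SimpleGraph V} (hG : G.Connected)
    (hcard : 2 ≤ Fintype.card V) (hP : IsOptPathCoverOf G P)
    (hT : IsSpanningTreeOf G T) : internalCount T ≤ P.edgeSet.ncard - 1 := by
  classical
  obtain ⟨hTG, hTree⟩ := hT
  have hTc : T.Connected := hTree.isConnected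
  have hdegpos : ∀ v, 1 ≤ (T.neighborSet v).ncard := connected_deg_pos hTc hcard
  -- edge count of the tree
  have hedge : T.edgeSet.ncard + 1 = Fintype.card V := by
    rw [encard_eq_card_edgeFinset]
    exact hTree.card_edgeFinset
  have hhs : ∑ v : V, (T.neighborSet v).ncard = 2 * T.edgeSet.ncard := handshake T
  set nd : V → ℕ := fun v => (T.neighborSet v).ncard with hnd
  set I : Finset V := Finset.univ.filter (fun v => 2 ≤ nd v) with hI
  set L : Finset V := Finset.univ.filter (fun v => ¬ 2 ≤ nd v) with hL
  have hIL : I.card + L.card = Fintype.card V := by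
    rw [hI, hL, Finset.card_filter_add_card_filter_not]
    exact Finset.card_univ
  -- sum splitting
  have hsplit : ∑ v : V, nd v = (∑ v : V, (nd v - 2)) + (2 * I.card + L.card) := by
    have h1 : ∑ v : V, nd v = ∑ v : V, ((nd v - 2) + min (nd v) 2) := by
      refine Finset.sum_congr rfl fun v _ => by omega
    rw [h1, Finset.sum_add_distrib]
    congr 1
    rw [← Finset.sum_filter_add_sum_filter_not Finset.univ (fun v => 2 ≤ nd v)]
    have h2 : ∑ v ∈ I, min (nd v) 2 = 2 * I.card := by
      have hcong : ∀ v ∈ I, min (nd v) 2 = 2 := by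
        intro v hv
        rw [hI, Finset.mem_filter] at hv
        omega
      rw [Finset.sum_congr rfl hcong, Finset.sum_const, smul_eq_mul, mul_comm]
    have h3 : ∑ v ∈ L, min (nd v) 2 = L.card := by
      have hcong : ∀ v ∈ L, min (nd v) 2 = 1 := by
        intro v hv
        rw [hL, Finset.mem_filter] at hv
        have hpos : 1 ≤ nd v := hdegpos v
        omega
      rw [Finset.sum_congr rfl hcong, Finset.sum_const, smul_eq_mul, mul_one]
    rw [← hI, h2, h3]
  obtain ⟨Q, hQT, hQa, hQd, hQcard⟩ :=
    exists_linear_subforest T.edgeSet.ncard T rfl hTree.IsAcyclic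
  have hQm : Q.edgeSet.ncard ≤ P.edgeSet.ncard :=
    hP.2 Q ⟨le_trans hQT hTG, hQa, hQd⟩
  have hint : internalCount T = I.card := by
    rw [internalCount, hI, ncard_set_eq_card_filter]
  have hdd : ∑ v : V, ((T.neighborSet v).ncard - 2) = ∑ v : V, (nd v - 2) := rfl
  have hhs2 : ∑ v : V, nd v = 2 * T.edgeSet.ncard := hhs
  omega

lemma bipartition_symm {G : SimpleGraph V} {X Y : Set V} (hbip : IsBipartition G X Y) :
    IsBipartition G Y X :=
  ⟨fun v => (hbip.1 v).symm, fun u v h => (hbip.2 u v h).symm⟩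

lemma chain_y_nested {G : SimpleGraph V} {X Y : Set V} (hbip : IsBipartition G X Y)
    (hnest : ∀ x ∈ X, ∀ x' ∈ X,
      G.neighborSet x ⊆ G.neighborSet x' ∨ G.neighborSet x' ⊆ G.neighborSet x) :
    ∀ y ∈ Y, ∀ y' ∈ Y,
      G.neighborSet y ⊆ G.neighborSet y' ∨ G.neighborSet y' ⊆ G.neighborSet y := by
  intro y hy y' hy'
  by_contra hcon
  push_neg at hcon
  obtain ⟨hc1, hc2⟩ := hcon
  obtain ⟨x, hxN, hxN'⟩ := Set.not_subset.1 hc1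
  obtain ⟨x', hx'N', hx'N⟩ := Set.not_subset.1 hc2
  have hxX : x ∈ X := by
    rcases hbip.2 y x hxN with ⟨hyX, -⟩ | ⟨-, hxX⟩
    · rcases hbip.1 y with ⟨-, hyny⟩ | ⟨-, hyNX⟩
      · exact absurd hy hyny
      · exact absurd hyX hyNX
    · exact hxX
  have hx'X : x' ∈ X := by
    rcases hbip.2 y' x' hx'N' with ⟨hy'X, -⟩ | ⟨-, hX⟩
    · rcases hbip.1 y' with ⟨-, hne⟩ | ⟨-, hyNX⟩
      · exact absurd hy' hne
      · exact absurd hy'X hyNX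
    · exact hX
  rcases hnest x hxX x' hx'X with hsub | hsub
  · exact hx'N (hsub (Adj.symm hxN) : G.Adj x' y).symm
  · exact hxN' (hsub (Adj.symm hx'N') : G.Adj x y').symm

lemma exists_dominating [Fintype V] {G : SimpleGraph V} {X Y : Set V}
    (hG : G.Connected) (hcard : 2 ≤ Fintype.card V) (hbip : IsBipartition G X Y)
    (hnest : ∀ x ∈ X, ∀ x' ∈ X,
      G.neighborSet x ⊆ G.neighborSet x' ∨ G.neighborSet x' ⊆ G.neighborSet x) :
    ∃ xp ∈ X, ∀ y ∈ Y, G.Adj xp y := by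
  -- X is nonempty
  have hne : X.Nonempty := by
    have : Nonempty V := Fintype.card_pos_iff.1 (by omega)
    obtain ⟨v⟩ := this
    have h1 := connected_deg_pos hG hcard v
    have h2 : (G.neighborSet v).ncard ≠ 0 := by omega
    obtain ⟨w, hw⟩ := Set.nonempty_of_ncard_ne_zero h2
    rcases hbip.2 v w hw with ⟨hvX, -⟩ | ⟨-, hwX⟩
    · exact ⟨v, hvX⟩
    · exact ⟨w, hwX⟩
  obtain ⟨xp, hxpX, hmax⟩ :=
    Set.exists_max_image X (fun x => (G.neighborSet x).ncard) (Set.toFinite X) hne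
  refine ⟨xp, hxpX, fun y hy => ?_⟩
  have h1 := connected_deg_pos hG hcard y
  have h2 : (G.neighborSet y).ncard ≠ 0 := by omega
  obtain ⟨u, hu⟩ := Set.nonempty_of_ncard_ne_zero h2
  have huX : u ∈ X := by
    rcases hbip.2 y u hu with ⟨hyX, -⟩ | ⟨-, huX⟩
    · rcases hbip.1 y with ⟨-, hyny⟩ | ⟨-, hynx⟩
      · exact absurd hy hyny
      · exact absurd hyX hynx
    · exact huX
  rcases hnest u huX xp hxpX with hsub | hsub
  · exact (hsub (Adj.symm hu) : G.Adj xp y)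
  · have heq : G.neighborSet xp = G.neighborSet u :=
      Set.eq_of_subset_of_ncard_le hsub (hmax u huX) (Set.toFinite _)
    have : y ∈ G.neighborSet xp := heq ▸ (Adj.symm hu : y ∈ G.neighborSet u)
    exact this

lemma interior_two_le [Fintype V] {P : SimpleGraph V} {a b : V} (p : P.Walk a b)
    (hp : p.IsPath) : ∀ x ∈ p.support, x ≠ a → x ≠ b → 2 ≤ (P.neighborSet x).ncard := by
  induction p with
  | nil =>
    intro x hx hxa _
    rw [SimpleGraph.Walk.support_nil, List.mem_singleton] at hx
    exact absurd hx hxa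
  | @cons u c b huc p ih =>
    intro x hx hxa hxb
    rw [SimpleGraph.Walk.support_cons, List.mem_cons] at hx
    rcases hx with rfl | hx
    · exact absurd rfl hxa
    by_cases hxc : x = c
    · subst hxc
      cases p with
      | nil => exact absurd rfl hxb
      | @cons c d b hcd q =>
        have hu : u ∉ (SimpleGraph.Walk.cons hcd q).support :=
          ((SimpleGraph.Walk.cons_isPath_iff _ _).1 hp).2
        have hd : d ∈ (SimpleGraph.Walk.cons hcd q).support := by
          rw [SimpleGraph.Walk.support_cons, List.mem_cons]
          exact Or.inr (SimpleGraph.Walk.start_mem_support q)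
        have hne : u ≠ d := fun h => hu (h ▸ hd)
        have hsub : ({u, d} : Set V) ⊆ P.neighborSet x := by
          rintro y (rfl | rfl)
          · exact huc.symm
          · exact hcd
        calc (2 : ℕ) = ({u, d} : Set V).ncard := (Set.ncard_pair hne).symm
          _ ≤ _ := Set.ncard_le_ncard hsub (Set.toFinite _)
    · exact ih ((SimpleGraph.Walk.cons_isPath_iff _ _).1 hp).1 x hx hxc hxb

lemma path_support_subset [Fintype V] {P : SimpleGraph V}
    (hdeg : ∀ v, (P.neighborSet v).ncard ≤ 2) :
    ∀ {a v : V} (p : P.Walk a v), p.IsPath → ∀ {z u' : V} (q : P.Walk a z), q.IsPath →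
      P.Adj a u' → u' ∉ p.support → u' ∉ q.support →
      p.support ⊆ q.support ∨ q.support ⊆ p.support := by
  intro a v p
  induction p with
  | nil =>
    intro _ z u' q _ _ _ _
    left
    intro x hx
    rw [SimpleGraph.Walk.support_nil, List.mem_singleton] at hx
    exact hx ▸ q.start_mem_support
  | @cons a c v hac p ih =>
    intro hp z u' q hq hadj hup huq
    cases q with
    | nil =>
      right
      intro x hx
      rw [SimpleGraph.Walk.support_nil, List.mem_singleton] at hx
      exact hx ▸ (SimpleGraph.Walk.cons hac p).start_mem_support
    | @cons a d z had q' =>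
      have hu'c : u' ≠ c := by
        intro h
        apply hup
        rw [SimpleGraph.Walk.support_cons, List.mem_cons]
        exact Or.inr (h ▸ p.start_mem_support)
      have hu'd : u' ≠ d := by
        intro h
        apply huq
        rw [SimpleGraph.Walk.support_cons, List.mem_cons]
        exact Or.inr (h ▸ q'.start_mem_support)
      have hcd : c = d := by
        by_contra hne
        have hsub : ({u', c, d} : Set V) ⊆ P.neighborSet a := by
          rintro y (rfl | rfl | rfl)
          · exact hadj
          · exact hac
          · exact had
        have hnm : u' ∉ ({c, d} : Set V) := by
          intro hmem
          rcases hmem with rfl | hmem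
          · exact hu'c rfl
          · exact hu'd (Set.mem_singleton_iff.1 hmem)
        have h3 : ({u', c, d} : Set V).ncard = 3 := by
          rw [Set.ncard_insert_of_notMem hnm (Set.toFinite _), Set.ncard_pair hne]
        have := Set.ncard_le_ncard hsub (Set.toFinite _)
        rw [h3] at this
        have := hdeg a
        omega
      subst hcd
      have hpp : p.IsPath := ((SimpleGraph.Walk.cons_isPath_iff _ _).1 hp).1
      have hqq : q'.IsPath := ((SimpleGraph.Walk.cons_isPath_iff _ _).1 hq).1
      have hap : a ∉ p.support := ((SimpleGraph.Walk.cons_isPath_iff _ _).1 hp).2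
      have haq : a ∉ q'.support := ((SimpleGraph.Walk.cons_isPath_iff _ _).1 hq).2
      rcases ih hpp q' hqq hac.symm hap haq with hsub | hsub
      · left
        rw [SimpleGraph.Walk.support_cons, SimpleGraph.Walk.support_cons]
        exact List.cons_subset_cons _ hsub
      · right
        rw [SimpleGraph.Walk.support_cons, SimpleGraph.Walk.support_cons]
        exact List.cons_subset_cons _ hsub

lemma two_leaves_aux [Fintype V] {P : SimpleGraph V}
    (hdeg : ∀ v, (P.neighborSet v).ncard ≤ 2) {u v w : V}
    (hv : (P.neighborSet v).ncard = 1) (hw : (P.neighborSet w).ncard = 1)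
    (huv : u ≠ v) (huw : u ≠ w) (hvw : v ≠ w)
    (ruv : P.Reachable u v) (ruw : P.Reachable u w)
    (hu1 : (P.neighborSet u).ncard = 1) : False := by
  classical
  obtain ⟨p0⟩ := ruv
  obtain ⟨q0⟩ := ruw
  let pp : P.Path u v := p0.toPath
  let qq : P.Path u w := q0.toPath
  obtain ⟨p, hp⟩ := pp
  obtain ⟨q, hq⟩ := qq
  cases p with
  | nil => exact huv rfl
  | @cons u c v huc p' =>
    cases q with
    | nil => exact huw rfl
    | @cons u d w hud q' =>
      -- c = d since deg u = 1
      obtain ⟨e, he⟩ := Set.ncard_eq_one.1 hu1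
      have hc : c = e := by
        have hmem : c ∈ P.neighborSet u := huc
        rwa [he, Set.mem_singleton_iff] at hmem
      have hd : d = e := by
        have hmem : d ∈ P.neighborSet u := hud
        rwa [he, Set.mem_singleton_iff] at hmem
      subst hc
      subst (hd : d = c)
      have hpp : p'.IsPath := ((SimpleGraph.Walk.cons_isPath_iff _ _).1 hp).1
      have hqq : q'.IsPath := ((SimpleGraph.Walk.cons_isPath_iff _ _).1 hq).1
      have hap : u ∉ p'.support := ((SimpleGraph.Walk.cons_isPath_iff _ _).1 hp).2
      have haq : u ∉ q'.support := ((SimpleGraph.Walk.cons_isPath_iff _ _).1 hq).2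
      rcases path_support_subset hdeg p' hpp q' hqq huc.symm hap haq with hsub | hsub
      · -- p'.support ⊆ q'.support : v is interior of cons q
        have hvmem : v ∈ (SimpleGraph.Walk.cons hud q').support := by
          rw [SimpleGraph.Walk.support_cons, List.mem_cons]
          exact Or.inr (hsub p'.end_mem_support)
        have := interior_two_le _ hq v hvmem (Ne.symm huv) hvw
        omega
      · have hwmem : w ∈ (SimpleGraph.Walk.cons huc p').support := by
          rw [SimpleGraph.Walk.support_cons, List.mem_cons]
          exact Or.inr (hsub q'.end_mem_support)
        have := interior_two_le _ hp w hwmem (Ne.symm huw) (Ne.symm hvw)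
        omega

lemma lower_bound [Fintype V] {G P : SimpleGraph V} {X Y : Set V} (hG : G.Connected)
    (hcard : 2 ≤ Fintype.card V) (hchain : IsChainGraph G X Y)
    (hPC : IsPathCoverOf G P) :
    ∃ T, IsSpanningTreeOf G T ∧ P.edgeSet.ncard - 2 ≤ internalCount T := by
  classical
  obtain ⟨hbip, hnest⟩ := hchain
  obtain ⟨hPG, hPa, hPd⟩ := hPC
  obtain ⟨xp, hxpX, hxpdom⟩ := exists_dominating hG hcard hbip hnest
  obtain ⟨yq, hyqY, hyqdom⟩ :=
    exists_dominating hG hcard (bipartition_symm hbip) (chain_y_nested hbip hnest)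
  let cls : V → P.ConnectedComponent := fun v => P.connectedComponentMk v
  let Z := cls xp
  let W := cls yq
  let Kset : Set P.ConnectedComponent :=
    {c | ∃ v, (P.neighborSet v).ncard = 1 ∧ cls v = c}
  let LC := Kset \ {Z, W}
  let f : P.ConnectedComponent → V := fun c =>
    if h : ∃ v, (P.neighborSet v).ncard = 1 ∧ cls v = c then h.choose else xp
  have hfspec : ∀ c ∈ Kset, (P.neighborSet (f c)).ncard = 1 ∧ cls (f c) = c := by
    intro c hc
    have hc' : ∃ v, (P.neighborSet v).ncard = 1 ∧ cls v = c := hc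
    show ((if h : ∃ v, (P.neighborSet v).ncard = 1 ∧ cls v = c then h.choose else xp) |>
      fun u => (P.neighborSet u).ncard = 1 ∧ cls u = c)
    rw [dif_pos hc']
    exact hc'.choose_spec
  -- the inductive construction of the augmented forest
  have hbuild : ∃ F, P ≤ F ∧ F ≤ G ∧ F.IsAcyclic ∧
      (∀ c ∈ LC, 2 ≤ (F.neighborSet (f c)).ncard) := by
    have main : ∃ F, P ≤ F ∧ F ≤ G ∧ F.IsAcyclic ∧
        (∀ v w, cls v ∉ LC → cls v ≠ Z → cls v ≠ W → (F.Adj v w ↔ P.Adj v w)) ∧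
        (∀ c ∈ LC, 2 ≤ (F.neighborSet (f c)).ncard) := by
      refine Set.Finite.induction_on_subset (motive := fun s _ => ∃ F, P ≤ F ∧ F ≤ G ∧ F.IsAcyclic ∧
        (∀ v w, cls v ∉ s → cls v ≠ Z → cls v ≠ W → (F.Adj v w ↔ P.Adj v w)) ∧
        (∀ c ∈ s, 2 ≤ (F.neighborSet (f c)).ncard)) LC (Set.toFinite LC) ?_ ?_
      · exact ⟨P, le_refl P, hPG, hPa, fun v w _ _ _ => Iff.rfl, fun c hc => absurd hc (by simp)⟩
      · rintro a s haLC hsub' ha ⟨F, hPF, hFG, hFa, hinv, hdegs⟩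
        have haK : a ∈ Kset := haLC.1
        have haZ : a ≠ Z := fun h => haLC.2 (Or.inl h)
        have haW : a ≠ W := fun h => haLC.2 (Or.inr h)
        obtain ⟨hu1, hucls⟩ := hfspec a haK
        set u := f a with hudef
        -- target vertex
        have htgt : ∃ t, G.Adj u t ∧ (cls t = Z ∨ cls t = W) := by
          rcases hbip.1 u with ⟨huX, -⟩ | ⟨huY, -⟩
          · exact ⟨yq, (hyqdom u huX).symm, Or.inr rfl⟩
          · exact ⟨xp, (hxpdom u huY).symm, Or.inl rfl⟩
        obtain ⟨tgt, htgtadj, htgtcls⟩ := htgt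
        have hne : u ≠ tgt := htgtadj.ne
        -- freshness walk lemma
        have key : ∀ (v w : V) (pw : F.Walk v w), cls v ∉ s → cls v ≠ Z → cls v ≠ W →
            P.Reachable v w := by
          intro v w pw
          induction pw with
          | nil => intro _ _ _; exact Reachable.refl _
          | @cons v c w h p ihw =>
            intro h1 h2 h3
            have hPadj : P.Adj v c := (hinv v c h1 h2 h3).1 h
            have hcc : cls c = cls v := ConnectedComponent.connectedComponentMk_eq_of_adj hPadj.symm
            exact (hPadj.reachable).trans (ihw (hcc ▸ h1) (hcc ▸ h2) (hcc ▸ h3))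
        have hnr : ¬ F.Reachable u tgt := by
          intro hr
          obtain ⟨pw⟩ := hr
          have := key u tgt pw (hucls ▸ ha) (hucls ▸ haZ) (hucls ▸ haW)
          have hequ : cls u = cls tgt := ConnectedComponent.sound this
          rcases htgtcls with h | h
          · exact haZ (hucls ▸ (hequ.trans h) ▸ rfl)
          · exact haW (hucls ▸ (hequ.trans h) ▸ rfl)
        refine ⟨F ⊔ edge u tgt, le_trans hPF le_sup_left, sup_le hFG (edge_le htgtadj),
          acyclic_sup_edge hne hnr hFa, ?_, ?_⟩
        · intro v w h1 h2 h3
          have h1s : cls v ∉ s := fun h => h1 (Set.mem_insert_of_mem a h)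
          have h1a : cls v ≠ a := fun h => h1 (h ▸ Set.mem_insert a s)
          rw [sup_adj, hinv v w h1s h2 h3]
          constructor
          · rintro (h | h)
            · exact h
            · rcases ((edge_adj u tgt v w).1 h).1 with ⟨rfl, rfl⟩ | ⟨rfl, rfl⟩
              · exact absurd hucls h1a
              · rcases htgtcls with hc | hc
                · exact absurd hc h2
                · exact absurd hc h3
          · exact Or.inl
        · intro c hc
          rcases Set.mem_insert_iff.1 hc with hca | hc
          · -- the new vertex u = f c
            rw [hca]
            obtain ⟨e, he⟩ := Set.ncard_eq_one.1 hu1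
            have hePadj : P.Adj u e := by
              have : e ∈ P.neighborSet u := by rw [he]; rfl
              exact this
            have hetgt : e ≠ tgt := by
              intro hh
              have hce : cls e = cls u := ConnectedComponent.connectedComponentMk_eq_of_adj hePadj.symm
              rcases htgtcls with hcc | hcc
              · exact haZ (by rw [← hucls, ← hce, hh, hcc])
              · exact haW (by rw [← hucls, ← hce, hh, hcc])
            have hsubn : ({e, tgt} : Set V) ⊆ (F ⊔ edge u tgt).neighborSet u := by
              rintro y (rfl | rfl)
              · exact Or.inl (hPF hePadj)
              · exact Or.inr ((edge_adj _ _ _ _).2 ⟨Or.inl ⟨rfl, rfl⟩, hne⟩)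
            calc (2 : ℕ) = ({e, tgt} : Set V).ncard := (Set.ncard_pair hetgt).symm
              _ ≤ _ := Set.ncard_le_ncard hsubn (Set.toFinite _)
          · exact le_trans (hdegs c hc) (nd_mono le_sup_left (f c))
    obtain ⟨F, h1, h2, h3, -, h5⟩ := main
    exact ⟨F, h1, h2, h3, h5⟩
  obtain ⟨F, hPF, hFG, hFa, hdegs⟩ := hbuild
  obtain ⟨T, hFT, hTG, hTree⟩ := exists_spanning_tree hG hFG hFa
  refine ⟨T, ⟨hTG, hTree⟩, ?_⟩
  -- counting
  have hPT : P ≤ T := le_trans hPF hFT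
  set IPset : Set V := {v | 2 ≤ (P.neighborSet v).ncard} with hIPset
  set Dset : Set V := f '' LC with hDset
  have hsubint : IPset ∪ Dset ⊆ {v | 2 ≤ (T.neighborSet v).ncard} := by
    rintro v (hv | ⟨c, hc, rfl⟩)
    · exact le_trans hv (nd_mono hPT v)
    · exact le_trans (hdegs c hc) (nd_mono hFT (f c))
  have hdisj : Disjoint IPset Dset := by
    rw [Set.disjoint_left]
    rintro v hv ⟨c, hc, rfl⟩
    have := (hfspec c hc.1).1
    rw [hIPset, Set.mem_setOf_eq] at hv
    omega
  have hDcard : Dset.ncard = LC.ncard := by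
    rw [hDset]
    apply Set.ncard_image_of_injOn
    intro c1 hc1 c2 hc2 heq
    rw [← (hfspec c1 hc1.1).2, ← (hfspec c2 hc2.1).2, heq]
  have hint : IPset.ncard + LC.ncard ≤ internalCount T := by
    rw [internalCount, ← hDcard, ← Set.ncard_union_eq hdisj (Set.toFinite _) (Set.toFinite _)]
    exact Set.ncard_le_ncard hsubint (Set.toFinite _)
  -- arithmetic
  have hKLC : Kset.ncard ≤ LC.ncard + 2 := by
    have hsubK : Kset ⊆ LC ∪ {Z, W} := by
      intro c hc
      by_cases h : c ∈ ({Z, W} : Set P.ConnectedComponent)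
      · exact Or.inr h
      · exact Or.inl ⟨hc, h⟩
    calc Kset.ncard ≤ (LC ∪ {Z, W}).ncard := Set.ncard_le_ncard hsubK (Set.toFinite _)
      _ ≤ LC.ncard + ({Z, W} : Set P.ConnectedComponent).ncard := Set.ncard_union_le _ _
      _ ≤ LC.ncard + 2 := by
          have := Set.ncard_insert_le Z ({W} : Set P.ConnectedComponent)
          have h1 : ({W} : Set P.ConnectedComponent).ncard = 1 := Set.ncard_singleton W
          omega
  -- leaves: Lfin, fiber bound
  set Lfin : Finset V := Finset.univ.filter (fun v => (P.neighborSet v).ncard = 1) with hLfin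
  have hfiber : Lfin.card ≤ 2 * (Lfin.image cls).card := by
    apply Finset.card_le_mul_card_image
    intro c hc
    by_contra hgt
    push_neg at hgt
    obtain ⟨u, hu, v, hv, w, hw, huv, huw, hvw⟩ := Finset.two_lt_card.1 hgt
    simp only [Finset.mem_filter, Finset.mem_univ, true_and, hLfin] at hu hv hw
    have ruv : P.Reachable u v := ConnectedComponent.exact (hu.2.trans hv.2.symm)
    have ruw : P.Reachable u w := ConnectedComponent.exact (hu.2.trans hw.2.symm)
    exact two_leaves_aux hPd hv.1 hw.1 huv huw hvw ruv ruw hu.1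
  have hKeq : Kset.ncard = (Lfin.image cls).card := by
    rw [← Set.ncard_coe_finset]
    congr 1
    ext c
    simp only [Finset.coe_image, Set.mem_image, Finset.mem_coe, Finset.mem_filter,
      Finset.mem_univ, true_and, hLfin]
    constructor
    · rintro ⟨v, h1, h2⟩
      exact ⟨v, h1, h2⟩
    · rintro ⟨v, h1, h2⟩
      exact ⟨v, h1, h2⟩
  -- handshake split
  set Ifin : Finset V := Finset.univ.filter (fun v => 2 ≤ (P.neighborSet v).ncard) with hIfin
  have hhs : ∑ v : V, (P.neighborSet v).ncard = 2 * P.edgeSet.ncard := handshake P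
  have hsplit : ∑ v : V, (P.neighborSet v).ncard = 2 * Ifin.card + Lfin.card := by
    have h1 : ∀ v : V, (P.neighborSet v).ncard =
        (if 2 ≤ (P.neighborSet v).ncard then 2 else 0) +
        (if (P.neighborSet v).ncard = 1 then 1 else 0) := by
      intro v
      have := hPd v
      split_ifs <;> omega
    rw [Finset.sum_congr rfl fun v _ => h1 v, Finset.sum_add_distrib]
    congr 1
    · rw [← Finset.sum_filter, ← hIfin, Finset.sum_const, smul_eq_mul, mul_comm]
    · rw [← Finset.sum_filter, ← hLfin, Finset.sum_const, smul_eq_mul, mul_one]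
  have hIP : IPset.ncard = Ifin.card := by
    rw [hIPset, hIfin, ncard_set_eq_card_filter]
  omega

end AuxiliaryLemmas

theorem stmt18 {V : Type*} [Fintype V] (G : SimpleGraph V) (hG : G.Connected)
    (hcard : 2 ≤ Fintype.card V)
    (X Y : Set V) (hchain : IsChainGraph G X Y)
    (P : SimpleGraph V) (hP : IsOptPathCoverOf G P) :
    (∃ T, IsSpanningTreeOf G T ∧ P.edgeSet.ncard - 2 ≤ internalCount T) ∧
    (∀ T, IsSpanningTreeOf G T → internalCount T ≤ P.edgeSet.ncard - 1) := by
  constructor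
  · exact lower_bound hG hcard hchain hP.1
  · intro T hT
    exact upper_bound hG hcard hP hT
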